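/- Let (M, J, g) be a metallic pseudo-Riemannian manifold with twin metric G, ∇ a linear connection and ∇† the G-conjugate connection. If both (∇, J) and (∇, G) are Codazzi-coupled, then for all X, Y, Z: G((∇†_X J)Y − (∇†_Y J)X, Z) = G(Y, (∇_Z J)X − (∇†_Z J)X). -/

import Mathlib

variable {A : Type*} [CommRing A] [Algebra ℝ A]
variable {V : Type*} [AddCommGroup V] [Module ℝ V] [Module A V] [IsScalarTower ℝ A V]

/-- Covariant derivative `(D_X T) Y` of a (1,1)-tensor field `T`. -/
def covT (D : V → V → V) (T : V → V) (X Y : V) : V := D X (T Y) - T (D X Y)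

/-- `covM Dact D h X Y Z = (D_Z h)(X,Y)`, the covariant derivative of a
(0,2)-tensor field `h`, where `Dact` is the action of vector fields on functions. -/
def covM (Dact : V → A → A) (D : V → V → V) (h : V → V → A) (X Y Z : V) : A :=
  Dact Z (h X Y) - h (D Z X) Y - h X (D Z Y)

/-!
Pairing `(∇†_X J) Y` against `Z` and moving `∇†` across the conjugacy relation turns it into
`(∇_X J) Z` paired against `Y`; this uses only that `G` is symmetric and `J` is `G`-self-adjoint,
both of which hold for the twin metric. The identity then follows from this exchange rule and
the Codazzi symmetry of `∇J`.
-/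

namespace LinearMap.BilinForm

variable {R : Type*} [CommRing R] {M : Type*} [AddCommGroup M] [Module R M]

theorem isSymm_comp_of_isSelfAdjoint {g : LinearMap.BilinForm R M} {J : M →ₗ[R] M}
    (hg : g.IsSymm) (hJ : g.IsSelfAdjoint J) : IsSymm (g ∘ₗ J) :=
  ⟨fun X Y => show g (J X) Y = g (J Y) X by rw [hJ, hg.eq]⟩

theorem isSelfAdjoint_comp {g : LinearMap.BilinForm R M} {J : M →ₗ[R] M} (hJ : g.IsSelfAdjoint J) :
    (g ∘ₗ J).IsSelfAdjoint J :=
  fun X Y => hJ (J X) Y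

def IsConjugateConnection (Dact : M → R → R) (G : LinearMap.BilinForm R M)
    (D Dd : M → M → M) : Prop :=
  ∀ X Y Z, Dact Z (G X Y) = G (D Z X) Y + G X (Dd Z Y)

variable {Dact : M → R → R} {G : LinearMap.BilinForm R M} {J : M →ₗ[R] M} {D Dd : M → M → M}

theorem apply_covT_conjugate (hG : G.IsSymm) (hJ : G.IsSelfAdjoint J)
    (hDd : IsConjugateConnection Dact G D Dd) (X Y Z : M) :
    G (covT Dd J X Y) Z = G (covT D J X Z) Y := by
  have hDdJ : G (Dd X (J Y)) Z = Dact X (G (J Z) Y) - G (J (D X Z)) Y := by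
    have h := hDd Z (J Y) X
    rw [← hJ Z Y, ← hJ (D X Z) Y] at h
    rw [hG.eq]
    linear_combination -h
  have hJDd : G (J (Dd X Y)) Z = Dact X (G (J Z) Y) - G (D X (J Z)) Y := by
    rw [hJ, hG.eq]
    linear_combination -hDd (J Z) Y X
  simp only [covT, map_sub, LinearMap.sub_apply]
  rw [hDdJ, hJDd]
  ring

theorem apply_covT_conjugate_sub_swap (hG : G.IsSymm) (hJ : G.IsSelfAdjoint J)
    (hDd : IsConjugateConnection Dact G D Dd) (hCod : ∀ X Y, covT D J X Y = covT D J Y X)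
    (X Y Z : M) :
    G (covT Dd J X Y - covT Dd J Y X) Z = G Y (covT D J Z X - covT Dd J Z X) :=
  calc G (covT Dd J X Y - covT Dd J Y X) Z
      = G (covT D J X Z) Y - G (covT D J Y Z) X := by
        rw [map_sub, LinearMap.sub_apply, apply_covT_conjugate hG hJ hDd,
          apply_covT_conjugate hG hJ hDd]
    _ = G (covT D J Z X) Y - G (covT Dd J Z X) Y := by
        rw [hCod X Z, hCod Y Z, apply_covT_conjugate hG hJ hDd Z X Y]
    _ = G Y (covT D J Z X - covT Dd J Z X) := by
        rw [map_sub, hG.eq Y, hG.eq Y]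

end LinearMap.BilinForm

theorem codazzi_G_conjugate_identity_general
    (Dact : V → A → A) (D Dd : V → V → V)
    (g : V →ₗ[A] V →ₗ[A] A) (J : V →ₗ[A] V)
    (hsym : ∀ X Y, g X Y = g Y X)
    (hJsym : ∀ X Y, g (J X) Y = g X (J Y))
    -- Dd is the G-conjugate of D, where G(X,Y) = g(JX,Y)
    (hDd : ∀ X Y Z, Dact Z (g (J X) Y) = g (J (D Z X)) Y + g (J X) (Dd Z Y))
    -- (∇,J) Codazzi-coupled
    (hCodJ : ∀ X Y, covT D (⇑J) X Y = covT D (⇑J) Y X) :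
    ∀ X Y Z, g (J (covT Dd (⇑J) X Y - covT Dd (⇑J) Y X)) Z
      = g (J Y) (covT D (⇑J) Z X - covT Dd (⇑J) Z X) :=
  LinearMap.BilinForm.apply_covT_conjugate_sub_swap
    (LinearMap.BilinForm.isSymm_comp_of_isSelfAdjoint ⟨hsym⟩ hJsym)
    (LinearMap.BilinForm.isSelfAdjoint_comp hJsym) hDd hCodJ

/-- if (∇,J) and (∇,G) are Codazzi-coupled, then
G((∇†_X J)Y − (∇†_Y J)X, Z) = G(Y, (∇_Z J)X − (∇†_Z J)X). -/
theorem codazzi_G_conjugate_identity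
    (Dact : V → A → A) (D Dd : V → V → V)
    (g : V →ₗ[A] V →ₗ[A] A) (J : V →ₗ[A] V) (p q : ℝ)
    (hsym : ∀ X Y, g X Y = g Y X)
    (hJsym : ∀ X Y, g (J X) Y = g X (J Y))
    (hJ2 : ∀ X, J (J X) = p • J X + q • X)
    (hGnd : ∀ X, (∀ Y, g (J X) Y = 0) → X = 0)
    -- Dd is the G-conjugate of D, where G(X,Y) = g(JX,Y)
    (hDd : ∀ X Y Z, Dact Z (g (J X) Y) = g (J (D Z X)) Y + g (J X) (Dd Z Y))
    -- (∇,J) Codazzi-coupled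
    (hCodJ : ∀ X Y, covT D (⇑J) X Y = covT D (⇑J) Y X)
    -- (∇,G) Codazzi-coupled: (∇_X G)(Y,Z) = (∇_Z G)(X,Y)
    (hCodG : ∀ X Y Z, covM Dact D (fun a b => g (J a) b) Y Z X
      = covM Dact D (fun a b => g (J a) b) X Y Z) :
    ∀ X Y Z, g (J (covT Dd (⇑J) X Y - covT Dd (⇑J) Y X)) Z
      = g (J Y) (covT D (⇑J) Z X - covT Dd (⇑J) Z X) :=
  codazzi_G_conjugate_identity_general Dact D Dd g J hsym hJsym hDd hCodJ
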